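/- Let X_t be an irreducible continuous-time Markov chain on a finite set V with stationary measure π. Fix V_0 ⊂ W ⊂ V, g : V_0 → ℝ, and let f and f_W be the solutions of the Poisson equations Lf = 0 on V∖V_0, f = g on V_0, and L_W f_W = 0 on W∖V_0, f_W = g on V_0, where L_W is the generator of the trace process on W. Then the Dirichlet forms satisfy D(f) = π(W) ⟨f_W, (−L_W) f_W⟩_{π_W}, where π_W(x) = π(x)/π(W) for x ∈ W is the conditioned stationary measure. -/

import Mathlib

open Finset Filter Topology

noncomputable section

/-- Generator of a continuous-time Markov chain with jump rates `R`. -/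
def gen {V : Type*} [Fintype V] (R : V → V → ℝ) (f : V → ℝ) (x : V) : ℝ :=
  ∑ y, R x y * (f y - f x)

/-- Generator of a chain restricted to the subset `W` (e.g. a trace process). -/
def genOn {V : Type*} [Fintype V] [DecidableEq V] (W : Finset V) (R : V → V → ℝ)
    (f : V → ℝ) (x : V) : ℝ :=
  ∑ y ∈ W, R x y * (f y - f x)

/-- Detailed balance (reversibility) of `π` for the rates `R`. -/
def Reversible {V : Type*} (R : V → V → ℝ) (π : V → ℝ) : Prop :=
  ∀ x y, π x * R x y = π y * R y x

/-- Stationarity of `π` for the rates `R`. -/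
def Stationary {V : Type*} [Fintype V] (R : V → V → ℝ) (π : V → ℝ) : Prop :=
  ∀ y, ∑ x, π x * R x y = π y * ∑ z, R y z

/-- Irreducibility of the rates `R`. -/
def Irred {V : Type*} (R : V → V → ℝ) : Prop :=
  ∀ x y : V, Relation.ReflTransGen (fun a b => 0 < R a b) x y

/-- `h` is the equilibrium potential `h(x) = P_x[H_A < H_B]` : it equals `1` on `A`,
`0` on `B` and is harmonic elsewhere. -/
def IsEqPotential {V : Type*} [Fintype V] (R : V → V → ℝ) (A B : Finset V)
    (h : V → ℝ) : Prop :=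
  (∀ x ∈ A, h x = 1) ∧ (∀ x ∈ B, h x = 0) ∧ ∀ x, x ∉ A → x ∉ B → gen R h x = 0

/-- The capacity `Cap(A,B) = ∑_{x∈A} π(x) λ(x) P_x[H_B < H_A⁺]`, expressed through the
equilibrium potential `h = h_{A,B}` as `-∑_{x∈A} π(x) (L h)(x)`. -/
def capFor {V : Type*} [Fintype V] (R : V → V → ℝ) (π : V → ℝ) (A : Finset V)
    (h : V → ℝ) : ℝ :=
  ∑ x ∈ A, π x * (-(gen R h x))

/-!
Write `φ̃ = ∑_{y ∈ W} hm(·, y) φ(y)` for the harmonic extension of `φ` off `W`. Splitting the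
jumps out of `x ∈ W` according to whether they land in `W` or start an excursion outside it gives
`L_W φ = L φ̃` on `W`. Hence `π` is invariant for `L_W` (because `∑ π L φ̃ = 0`), and `L_W f = L f`
on `W` (because `f = f̃` by the maximum principle). Since `f` is harmonic off `V₀ ⊆ W`, `D(f)` is
the `L_W`-energy of `f` on `W`; and `f`, `f_W` are both `L_W`-harmonic on `W \ V₀` with the same
values on `V₀`, so an energy argument shows that they have the same `L_W`-energy.
-/

section Generator

variable {V : Type*} [Fintype V] (R : V → V → ℝ)

lemma gen_sub (u v : V → ℝ) (x : V) : gen R (u - v) x = gen R u x - gen R v x := by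
  simp only [gen, Pi.sub_apply, ← sum_sub_distrib]
  exact sum_congr rfl fun y _ => by ring

lemma gen_neg (u : V → ℝ) (x : V) : gen R (-u) x = -gen R u x := by
  simp only [gen, Pi.neg_apply, ← sum_neg_distrib]
  exact sum_congr rfl fun y _ => by ring

lemma gen_const (c : ℝ) (x : V) : gen R (fun _ => c) x = 0 := by
  simp [gen]

lemma gen_sum_mul {ι : Type*} (s : Finset ι) (F : ι → V → ℝ) (c : ι → ℝ) (x : V) :
    gen R (fun v => ∑ i ∈ s, F i v * c i) x = ∑ i ∈ s, gen R (F i) x * c i := by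
  simp only [gen, sum_mul, ← sum_sub_distrib, mul_sum]
  rw [sum_comm]
  exact sum_congr rfl fun y _ => sum_congr rfl fun i _ => by ring

lemma Stationary.sum_mul_gen_eq_zero {π : V → ℝ} (hstat : Stationary R π) (φ : V → ℝ) :
    ∑ x, π x * gen R φ x = 0 := by
  have hflow : ∑ x, ∑ y, π x * R x y * φ y = ∑ x, ∑ y, π x * R x y * φ x := by
    rw [sum_comm]
    refine sum_congr rfl fun y _ => ?_
    rw [← sum_mul, hstat y, mul_sum, sum_mul]
  simp only [gen, mul_sum, mul_sub, sum_sub_distrib, ← mul_assoc, hflow, sub_self]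

lemma eq_of_gen_eq_zero_of_forall_le (hR : ∀ x y, 0 ≤ R x y) {u : V → ℝ} {a c : V}
    (hmax : ∀ x, u x ≤ u a) (ha : gen R u a = 0) (hac : 0 < R a c) : u c = u a := by
  have hterms : ∀ y ∈ univ, R a y * (u y - u a) ≤ 0 := fun y _ =>
    mul_nonpos_of_nonneg_of_nonpos (hR a y) (sub_nonpos.mpr (hmax y))
  have hc := (sum_eq_zero_iff_of_nonpos hterms).mp ha c (mem_univ c)
  linarith [(mul_eq_zero.mp hc).resolve_left hac.ne']

lemma exists_mem_forall_le_of_gen_eq_zero (hR : ∀ x y, 0 ≤ R x y) (hirr : Irred R)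
    {W : Finset V} (hW : W.Nonempty) {u : V → ℝ} (hu : ∀ x ∉ W, gen R u x = 0) :
    ∃ w ∈ W, ∀ x, u x ≤ u w := by
  obtain ⟨w₀, hw₀⟩ := hW
  have : Nonempty V := ⟨w₀⟩
  obtain ⟨z, hz⟩ := Finite.exists_max u
  suffices ∀ a, Relation.ReflTransGen (fun p q => 0 < R p q) a w₀ →
      (∀ x, u x ≤ u a) → ∃ w ∈ W, ∀ x, u x ≤ u w from this z (hirr z w₀) hz
  intro a hpath
  induction hpath using Relation.ReflTransGen.head_induction_on with
  | refl => exact fun hmax => ⟨w₀, hw₀, hmax⟩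
  | @head a c hac _ ih =>
    intro hmax
    by_cases haW : a ∈ W
    · exact ⟨a, haW, hmax⟩
    · refine ih fun x => ?_
      rw [eq_of_gen_eq_zero_of_forall_le R hR hmax (hu a haW) hac]
      exact hmax x

lemma exists_mem_forall_ge_of_gen_eq_zero (hR : ∀ x y, 0 ≤ R x y) (hirr : Irred R)
    {W : Finset V} (hW : W.Nonempty) {u : V → ℝ} (hu : ∀ x ∉ W, gen R u x = 0) :
    ∃ w ∈ W, ∀ x, u w ≤ u x := by
  obtain ⟨w, hw, hmax⟩ := exists_mem_forall_le_of_gen_eq_zero R hR hirr hW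
    (u := -u) fun x hx => by rw [gen_neg, hu x hx, neg_zero]
  exact ⟨w, hw, fun x => neg_le_neg_iff.mp (hmax x)⟩

lemma eq_of_gen_eq_zero_of_eqOn (hR : ∀ x y, 0 ≤ R x y) (hirr : Irred R)
    {W : Finset V} (hW : W.Nonempty) {u v : V → ℝ} (hu : ∀ x ∉ W, gen R u x = 0)
    (hv : ∀ x ∉ W, gen R v x = 0) (huv : ∀ x ∈ W, u x = v x) : u = v := by
  have hd : ∀ x ∉ W, gen R (u - v) x = 0 := fun x hx => by
    rw [gen_sub, hu x hx, hv x hx, sub_zero]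
  obtain ⟨w₁, hw₁, hmax⟩ := exists_mem_forall_le_of_gen_eq_zero R hR hirr hW hd
  obtain ⟨w₂, hw₂, hmin⟩ := exists_mem_forall_ge_of_gen_eq_zero R hR hirr hW hd
  funext x
  have h₁ := hmax x
  have h₂ := hmin x
  simp only [Pi.sub_apply, huv w₁ hw₁, huv w₂ hw₂, sub_self] at h₁ h₂
  linarith

end Generator

section HarmonicMeasure

variable {V : Type*} [Fintype V] [DecidableEq V] (R : V → V → ℝ) (W : Finset V)
  (hm : V → V → ℝ)

/-- `hm x y = P_x[X_{H_W} = y]`, characterized as the solution of a Dirichlet problem. -/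
structure IsHarmonicMeasure : Prop where
  eq_ite_of_mem : ∀ x ∈ W, ∀ y, hm x y = if x = y then 1 else 0
  gen_eq_zero_of_notMem : ∀ x ∉ W, ∀ y, gen R (fun z => hm z y) x = 0

def harmonicExtension (φ : V → ℝ) : V → ℝ := fun v => ∑ y ∈ W, hm v y * φ y

variable {R W hm}

lemma IsHarmonicMeasure.harmonicExtension_of_mem (hhm : IsHarmonicMeasure R W hm)
    (φ : V → ℝ) {x : V} (hx : x ∈ W) : harmonicExtension W hm φ x = φ x := by
  simp only [harmonicExtension, hhm.eq_ite_of_mem x hx, ite_mul, one_mul, zero_mul,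
    sum_ite_eq, if_pos hx]

lemma IsHarmonicMeasure.gen_harmonicExtension_of_notMem (hhm : IsHarmonicMeasure R W hm)
    (φ : V → ℝ) {x : V} (hx : x ∉ W) : gen R (harmonicExtension W hm φ) x = 0 := by
  refine (gen_sum_mul R W (fun y z => hm z y) φ x).trans (sum_eq_zero fun y _ => ?_)
  rw [hhm.gen_eq_zero_of_notMem x hx y, zero_mul]

lemma IsHarmonicMeasure.eq_harmonicExtension (hhm : IsHarmonicMeasure R W hm)
    (hR : ∀ x y, 0 ≤ R x y) (hirr : Irred R) (hW : W.Nonempty) {f : V → ℝ}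
    (hf : ∀ x ∉ W, gen R f x = 0) : f = harmonicExtension W hm f :=
  eq_of_gen_eq_zero_of_eqOn R hR hirr hW hf
    (fun _ hx => hhm.gen_harmonicExtension_of_notMem f hx)
    (fun _ hx => (hhm.harmonicExtension_of_mem f hx).symm)

lemma IsHarmonicMeasure.sum_eq_one (hhm : IsHarmonicMeasure R W hm)
    (hR : ∀ x y, 0 ≤ R x y) (hirr : Irred R) (hW : W.Nonempty) (v : V) :
    ∑ y ∈ W, hm v y = 1 := by
  have h := congrFun (hhm.eq_harmonicExtension hR hirr hW fun x _ => gen_const R 1 x) v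
  simpa only [harmonicExtension, mul_one] using h.symm

lemma IsHarmonicMeasure.nonneg (hhm : IsHarmonicMeasure R W hm)
    (hR : ∀ x y, 0 ≤ R x y) (hirr : Irred R) (hW : W.Nonempty) (v y : V) : 0 ≤ hm v y := by
  obtain ⟨w, hw, hmin⟩ := exists_mem_forall_ge_of_gen_eq_zero R hR hirr hW
    (u := fun z => hm z y) fun x hx => hhm.gen_eq_zero_of_notMem x hx y
  refine le_trans ?_ (hmin v)
  rw [hhm.eq_ite_of_mem w hw y]
  split_ifs <;> norm_num

end HarmonicMeasure

section Trace

variable {V : Type*} [Fintype V] [DecidableEq V] {R : V → V → ℝ} {W : Finset V}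
  {hm : V → V → ℝ} {RW : V → V → ℝ}

lemma genOn_eq_gen_harmonicExtension (hhm : IsHarmonicMeasure R W hm)
    (hsum : ∀ v, ∑ y ∈ W, hm v y = 1)
    (hRW : ∀ x ∈ W, ∀ y ∈ W, x ≠ y → RW x y = R x y + ∑ z ∈ Wᶜ, R x z * hm z y)
    (φ : V → ℝ) {x : V} (hx : x ∈ W) :
    genOn W RW φ x = gen R (harmonicExtension W hm φ) x := by
  have hrate : ∀ y ∈ W, RW x y * (φ y - φ x)
      = R x y * (φ y - φ x) + ∑ z ∈ Wᶜ, R x z * hm z y * (φ y - φ x) := by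
    intro y hy
    rcases eq_or_ne x y with rfl | hxy
    · simp
    · rw [hRW x hx y hy hxy, add_mul, sum_mul]
  have hout : ∀ z, harmonicExtension W hm φ z - φ x = ∑ y ∈ W, hm z y * (φ y - φ x) := by
    intro z
    simp only [harmonicExtension, mul_sub, sum_sub_distrib, ← sum_mul, hsum z, one_mul]
  calc genOn W RW φ x
      = ∑ y ∈ W, R x y * (φ y - φ x) + ∑ y ∈ W, ∑ z ∈ Wᶜ, R x z * hm z y * (φ y - φ x) := by
        rw [genOn, sum_congr rfl hrate, sum_add_distrib]
    _ = ∑ y ∈ W, R x y * (harmonicExtension W hm φ y - harmonicExtension W hm φ x)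
          + ∑ z ∈ Wᶜ, R x z * (harmonicExtension W hm φ z - harmonicExtension W hm φ x) := by
        rw [hhm.harmonicExtension_of_mem φ hx, sum_comm (s := W)]
        congr 1
        · exact sum_congr rfl fun y hy => by rw [hhm.harmonicExtension_of_mem φ hy]
        · refine sum_congr rfl fun z _ => ?_
          rw [hout z, mul_sum]
          exact sum_congr rfl fun y _ => by ring
    _ = gen R (harmonicExtension W hm φ) x := by
        rw [gen, sum_add_sum_compl]

lemma sum_mul_genOn_trace_eq_zero {π : V → ℝ} (hstat : Stationary R π)
    (hhm : IsHarmonicMeasure R W hm) (hsum : ∀ v, ∑ y ∈ W, hm v y = 1)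
    (hRW : ∀ x ∈ W, ∀ y ∈ W, x ≠ y → RW x y = R x y + ∑ z ∈ Wᶜ, R x z * hm z y)
    (φ : V → ℝ) : ∑ x ∈ W, π x * genOn W RW φ x = 0 := by
  rw [← hstat.sum_mul_gen_eq_zero R (harmonicExtension W hm φ),
    ← sum_subset (subset_univ W) fun x _ hx => by
      rw [hhm.gen_harmonicExtension_of_notMem φ hx, mul_zero]]
  exact sum_congr rfl fun x hx => by rw [genOn_eq_gen_harmonicExtension hhm hsum hRW φ hx]

lemma trace_rate_nonneg (hR : ∀ x y, 0 ≤ R x y) (hhm : ∀ v y, 0 ≤ hm v y)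
    (hRW : ∀ x ∈ W, ∀ y ∈ W, x ≠ y → RW x y = R x y + ∑ z ∈ Wᶜ, R x z * hm z y)
    {x y : V} (hx : x ∈ W) (hy : y ∈ W) (hxy : x ≠ y) : 0 ≤ RW x y := by
  rw [hRW x hx y hy hxy]
  exact add_nonneg (hR x y) (sum_nonneg fun z _ => mul_nonneg (hR x z) (hhm z y))

end Trace

section DirichletForm

variable {V : Type*} [Fintype V] [DecidableEq V] (W : Finset V) (Q : V → V → ℝ) (π : V → ℝ)

def dirichletFormOn (a b : V → ℝ) : ℝ :=
  ∑ x ∈ W, π x * (a x * -genOn W Q b x)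

lemma genOn_sub (a b : V → ℝ) (x : V) :
    genOn W Q (a - b) x = genOn W Q a x - genOn W Q b x := by
  simp only [genOn, Pi.sub_apply, ← sum_sub_distrib]
  exact sum_congr rfl fun y _ => by ring

variable {W Q π}

lemma dirichletFormOn_sub_left (a b c : V → ℝ) :
    dirichletFormOn W Q π (a - b) c = dirichletFormOn W Q π a c - dirichletFormOn W Q π b c := by
  simp only [dirichletFormOn, Pi.sub_apply, ← sum_sub_distrib]
  exact sum_congr rfl fun x _ => by ring

lemma dirichletFormOn_sub_right (a b c : V → ℝ) :
    dirichletFormOn W Q π a (b - c) = dirichletFormOn W Q π a b - dirichletFormOn W Q π a c := by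
  simp only [dirichletFormOn, genOn_sub, ← sum_sub_distrib]
  exact sum_congr rfl fun x _ => by ring

lemma dirichletFormOn_eq_zero {V₀ : Finset V} {u b : V → ℝ} (hu : ∀ x ∈ V₀, u x = 0)
    (hb : ∀ x ∈ W, x ∉ V₀ → genOn W Q b x = 0) : dirichletFormOn W Q π u b = 0 := by
  refine sum_eq_zero fun x hx => ?_
  by_cases hx₀ : x ∈ V₀
  · rw [hu x hx₀, zero_mul, mul_zero]
  · rw [hb x hx hx₀, neg_zero, mul_zero, mul_zero]

lemma dirichletFormOn_add_swap (hinv : ∀ φ, ∑ x ∈ W, π x * genOn W Q φ x = 0)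
    (a b : V → ℝ) :
    dirichletFormOn W Q π a b + dirichletFormOn W Q π b a
      = ∑ x ∈ W, ∑ y ∈ W, π x * Q x y * ((a x - a y) * (b x - b y)) := by
  have h := hinv (a * b)
  simp only [dirichletFormOn, genOn, Pi.mul_apply, mul_sum, ← sum_neg_distrib,
    ← sum_add_distrib] at h ⊢
  rw [eq_comm, ← sub_eq_zero, ← sum_sub_distrib, ← h]
  exact sum_congr rfl fun x _ => by rw [← sum_sub_distrib]; exact sum_congr rfl fun y _ => by ring

/-- The difference `u = a - b` has zero energy, so it is constant along every jump of positive
rate. -/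
lemma dirichletFormOn_self_eq_of_harmonic (hinv : ∀ φ, ∑ x ∈ W, π x * genOn W Q φ x = 0)
    (hπ : ∀ x ∈ W, 0 ≤ π x) (hQ : ∀ x ∈ W, ∀ y ∈ W, x ≠ y → 0 ≤ Q x y)
    {V₀ : Finset V} {a b : V → ℝ} (hab : ∀ x ∈ V₀, a x = b x)
    (ha : ∀ x ∈ W, x ∉ V₀ → genOn W Q a x = 0) (hb : ∀ x ∈ W, x ∉ V₀ → genOn W Q b x = 0) :
    dirichletFormOn W Q π a a = dirichletFormOn W Q π b b := by
  set u := a - b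
  have hu : ∀ x ∈ V₀, u x = 0 := fun x hx => sub_eq_zero.mpr (hab x hx)
  have hua : dirichletFormOn W Q π u a = 0 := dirichletFormOn_eq_zero hu ha
  have hub : dirichletFormOn W Q π u b = 0 := dirichletFormOn_eq_zero hu hb
  have hnn : ∀ x ∈ W, ∀ y ∈ W, 0 ≤ π x * Q x y * ((u x - u y) * (u x - u y)) := by
    intro x hx y hy
    rcases eq_or_ne x y with rfl | hxy
    · simp
    · exact mul_nonneg (mul_nonneg (hπ x hx) (hQ x hx y hy hxy)) (mul_self_nonneg _)
  have henergy : ∑ x ∈ W, ∑ y ∈ W, π x * Q x y * ((u x - u y) * (u x - u y)) = 0 := by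
    rw [← dirichletFormOn_add_swap hinv, dirichletFormOn_sub_right, hua, hub]
    ring
  have hjump : ∀ x ∈ W, ∀ y ∈ W, π x * Q x y * ((u x - u y) * (u x - u y)) = 0 := fun x hx =>
    (sum_eq_zero_iff_of_nonneg (hnn x hx)).mp
      ((sum_eq_zero_iff_of_nonneg fun x hx => sum_nonneg (hnn x hx)).mp henergy x hx)
  have hau : dirichletFormOn W Q π a u + dirichletFormOn W Q π u a = 0 := by
    rw [dirichletFormOn_add_swap hinv]
    refine sum_eq_zero fun x hx => sum_eq_zero fun y hy => ?_
    rcases mul_eq_zero.mp (hjump x hx y hy) with h | h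
    · rw [h, zero_mul]
    · rw [mul_self_eq_zero.mp h, mul_zero, mul_zero]
  have h₁ := dirichletFormOn_sub_right (π := π) (Q := Q) (W := W) a a b
  have h₂ := dirichletFormOn_sub_left (π := π) (Q := Q) (W := W) a b b
  linarith

end DirichletForm

theorem stmt4_general {V : Type*} [Fintype V] [DecidableEq V]
    (R : V → V → ℝ) (π : V → ℝ)
    (hR : ∀ x y, 0 ≤ R x y)
    (hπ : ∀ x, 0 < π x) (hstat : Stationary R π) (hirr : Irred R)
    (W : Finset V) (hWne : W.Nonempty)
    (V₀ : Finset V) (hV₀W : V₀ ⊆ W)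
    (hm : V → V → ℝ)
    (hm0 : ∀ x ∈ W, ∀ y, hm x y = if x = y then 1 else 0)
    (hmh : ∀ x, x ∉ W → ∀ y, gen R (fun z => hm z y) x = 0)
    (RW : V → V → ℝ)
    (hRW : ∀ x ∈ W, ∀ y ∈ W, x ≠ y → RW x y = R x y + ∑ z ∈ Wᶜ, R x z * hm z y)
    (g f fW : V → ℝ)
    (hf0 : ∀ x ∈ V₀, f x = g x)
    (hfh : ∀ x, x ∉ V₀ → gen R f x = 0)
    (hfW0 : ∀ x ∈ V₀, fW x = g x)
    (hfWh : ∀ x ∈ W, x ∉ V₀ → genOn W RW fW x = 0) :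
    ∑ x, π x * (f x * (-(gen R f x)))
      = (∑ x ∈ W, π x) *
          ∑ x ∈ W, (π x / ∑ z ∈ W, π z) * (fW x * (-(genOn W RW fW x))) := by
  have hhm : IsHarmonicMeasure R W hm := ⟨hm0, hmh⟩
  have hsum := hhm.sum_eq_one hR hirr hWne
  have hLW : ∀ x ∈ W, genOn W RW f x = gen R f x := fun x hx => by
    rw [genOn_eq_gen_harmonicExtension hhm hsum hRW f hx,
      ← hhm.eq_harmonicExtension hR hirr hWne fun y hy => hfh y fun h => hy (hV₀W h)]
  have henergy : dirichletFormOn W RW π f f = dirichletFormOn W RW π fW fW :=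
    dirichletFormOn_self_eq_of_harmonic (sum_mul_genOn_trace_eq_zero hstat hhm hsum hRW)
      (fun x _ => (hπ x).le)
      (fun x hx y hy => trace_rate_nonneg hR (hhm.nonneg hR hirr hWne) hRW hx hy)
      (fun x hx => (hf0 x hx).trans (hfW0 x hx).symm)
      (fun x hx hx₀ => (hLW x hx).trans (hfh x hx₀)) hfWh
  have hπW : (∑ z ∈ W, π z) ≠ 0 := (sum_pos (fun z _ => hπ z) hWne).ne'
  calc ∑ x, π x * (f x * -gen R f x)
      = ∑ x ∈ W, π x * (f x * -gen R f x) :=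
        (sum_subset (subset_univ W) fun x _ hx => by
          rw [hfh x fun h => hx (hV₀W h), neg_zero, mul_zero, mul_zero]).symm
    _ = dirichletFormOn W RW π f f := sum_congr rfl fun x hx => by rw [hLW x hx]
    _ = dirichletFormOn W RW π fW fW := henergy
    _ = _ := by
        rw [dirichletFormOn, mul_sum]
        exact sum_congr rfl fun x _ => by field_simp

/-- with `f` the harmonic extension of `g : V₀ → ℝ` to `V` and `f_W` its
harmonic extension within `W` relative to the trace chain (whose jump rates
`R_W(x,y) = R(x,y) + ∑_{z∉W} R(x,z) P_z[X_{H_W}=y]` are expressed via the harmonic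
measure `hm`), the Dirichlet forms satisfy
`D(f) = π(W) ⟨f_W, (−L_W) f_W⟩_{π_W}` where `π_W = π(·)/π(W)`. -/
theorem stmt4 {V : Type*} [Fintype V] [DecidableEq V]
    (R : V → V → ℝ) (π : V → ℝ)
    (hR : ∀ x y, 0 ≤ R x y) (hRdiag : ∀ x, R x x = 0)
    (hπ : ∀ x, 0 < π x) (hstat : Stationary R π) (hirr : Irred R)
    (W : Finset V) (hWne : W.Nonempty)
    (V₀ : Finset V) (hV₀W : V₀ ⊆ W) (hV₀ne : V₀.Nonempty)
    (hm : V → V → ℝ)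
    (hm0 : ∀ x ∈ W, ∀ y, hm x y = if x = y then 1 else 0)
    (hmh : ∀ x, x ∉ W → ∀ y, gen R (fun z => hm z y) x = 0)
    (RW : V → V → ℝ)
    (hRW : ∀ x ∈ W, ∀ y ∈ W, x ≠ y → RW x y = R x y + ∑ z ∈ Wᶜ, R x z * hm z y)
    (hRWdiag : ∀ x, RW x x = 0)
    (g f fW : V → ℝ)
    (hf0 : ∀ x ∈ V₀, f x = g x)
    (hfh : ∀ x, x ∉ V₀ → gen R f x = 0)
    (hfW0 : ∀ x ∈ V₀, fW x = g x)
    (hfWh : ∀ x ∈ W, x ∉ V₀ → genOn W RW fW x = 0) :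
    ∑ x, π x * (f x * (-(gen R f x)))
      = (∑ x ∈ W, π x) *
          ∑ x ∈ W, (π x / ∑ z ∈ W, π z) * (fW x * (-(genOn W RW fW x))) :=
  stmt4_general R π hR hπ hstat hirr W hWne V₀ hV₀W hm hm0 hmh RW hRW g f fW hf0 hfh hfW0 hfWh
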